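/- arXiv:2003.06866 — 2 statements merged into one kernel-verified Lean document; each statement's English description precedes it below -/
import Mathlib

section
/- Convergence K +̌_φ ε·L → K as ε → 0⁺: for star bodies K, L in R^n and φ₁, φ₂ ∈ Φ, the half chord d(K +̌_φ ε·L, u) converges uniformly on S^{n-1} to d(K,u) as ε → 0⁺. -/
open MeasureTheory Metric Filter Set

noncomputable section

/-- A star body in `ℝⁿ`: a compact set, star-shaped about the origin, whose radial
function (recorded on the unit sphere) is positive and continuous. -/
structure StarBody (n : ℕ) where
  carrier : Set (EuclideanSpace ℝ (Fin n))
  radial : sphere (0 : EuclideanSpace ℝ (Fin n)) 1 → ℝ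
  radial_pos : ∀ u, 0 < radial u
  radial_continuous : Continuous radial
  isCompact : IsCompact carrier
  mem_iff : ∀ x, x ∈ carrier ↔ x = 0 ∨
    ∃ (u : sphere (0 : EuclideanSpace ℝ (Fin n)) 1) (c : ℝ),
      0 ≤ c ∧ c ≤ radial u ∧ x = c • (u : EuclideanSpace ℝ (Fin n))

/-- The half chord `d(K,u) = (ρ(K,u) + ρ(K,-u))/2` of a star body in direction `u`. -/
def StarBody.chord {n : ℕ} (K : StarBody n) (u : sphere (0 : EuclideanSpace ℝ (Fin n)) 1) : ℝ :=
  (K.radial u + K.radial (-u)) / 2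

/-- Spherical (surface-type) measure on the unit sphere of `ℝⁿ`. -/
def sphereMeasure (n : ℕ) : Measure (sphere (0 : EuclideanSpace ℝ (Fin n)) 1) :=
  (volume : Measure (EuclideanSpace ℝ (Fin n))).toSphere

/-- The chord integral `B_i(K) = (1/n) ∫_{S^{n-1}} d(K,u)^{n-i} dS(u)`. -/
def chordIntegral (n i : ℕ) (K : StarBody n) : ℝ :=
  (1 / (n : ℝ)) * ∫ u, K.chord u ^ ((n : ℝ) - i) ∂(sphereMeasure n)

/-- `K` and `L` have similar chord: `d(K,·) = λ d(L,·)` for some `λ > 0`. -/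
def SimilarChord {n : ℕ} (K L : StarBody n) : Prop :=
  ∃ lam : ℝ, 0 < lam ∧ ∀ u, K.chord u = lam * L.chord u

/-- The class `Φ`: convex, strictly decreasing `φ : [0,∞) → (0,∞]` with `φ(0) = ∞`
(encoded as a blow-up at `0⁺`), `φ(∞) = 0` and `φ(1) = 1`. -/
structure OrliczPhi where
  toFun : ℝ → ℝ
  pos : ∀ x > (0 : ℝ), 0 < toFun x
  convexOn : ConvexOn ℝ (Set.Ioi 0) toFun
  strictAnti : StrictAntiOn toFun (Set.Ioi 0)
  tendsto_zero : Tendsto toFun (nhdsWithin 0 (Set.Ioi 0)) atTop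
  tendsto_atTop : Tendsto toFun atTop (nhds 0)
  map_one : toFun 1 = 1

lemma StarBody.chord_pos {n : ℕ} (K : StarBody n)
    (u : sphere (0 : EuclideanSpace ℝ (Fin n)) 1) : 0 < K.chord u := by
  have h1 := K.radial_pos u
  have h2 := K.radial_pos (-u)
  unfold StarBody.chord
  linarith

lemma StarBody.chord_continuous {n : ℕ} (K : StarBody n) :
    Continuous (fun u => K.chord u) := by
  unfold StarBody.chord
  have hneg : Continuous (fun u : sphere (0 : EuclideanSpace ℝ (Fin n)) 1 => -u) := by
    apply Continuous.subtype_mk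
    exact continuous_neg.comp continuous_subtype_val
  exact ((K.radial_continuous.add (K.radial_continuous.comp hneg)).div_const 2)

/-- Convergence `K +̌_φ ε·L → K` as `ε → 0⁺`: the half chords of the Orlicz combination
converge uniformly on the sphere to the half chord of `K`. -/
theorem orlicz_combination_tendsto_uniformly {n : ℕ} (φ₁ φ₂ : OrliczPhi)
    (K L : StarBody n) (M : ℝ → StarBody n)
    (hM : ∀ ε > (0 : ℝ), ∀ u,
      φ₁.toFun (K.chord u / (M ε).chord u) + ε * φ₂.toFun (L.chord u / (M ε).chord u) = 1) :
    TendstoUniformly (fun ε u => (M ε).chord u) (fun u => K.chord u)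
      (nhdsWithin 0 (Set.Ioi 0)) := by
  rw [Metric.tendstoUniformly_iff]
  intro δ hδ
  rcases isEmpty_or_nonempty (sphere (0 : EuclideanSpace ℝ (Fin n)) 1) with hE | hNE
  · filter_upwards with ε
    intro u
    exact (hE.false u).elim
  · haveI : CompactSpace (sphere (0 : EuclideanSpace ℝ (Fin n)) 1) :=
      isCompact_iff_compactSpace.mp (isCompact_sphere _ _)
    obtain ⟨uK, -, huK⟩ := isCompact_univ.exists_isMaxOn Set.univ_nonempty
      K.chord_continuous.continuousOn
    obtain ⟨uL, -, huL⟩ := isCompact_univ.exists_isMinOn Set.univ_nonempty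
      L.chord_continuous.continuousOn
    have huK : ∀ u, K.chord u ≤ K.chord uK := fun u => huK (Set.mem_univ u)
    have huL : ∀ u, L.chord uL ≤ L.chord u := fun u => huL (Set.mem_univ u)
    set A : ℝ := K.chord uK with hAdef
    set B : ℝ := L.chord uL with hBdef
    have hA : 0 < A := K.chord_pos uK
    have hB : 0 < B := L.chord_pos uL
    have h1lt : (1 : ℝ) < 1 + δ / A := by
      have : 0 < δ / A := div_pos hδ hA
      linarith
    have hη : φ₁.toFun (1 + δ / A) < 1 := by
      have := φ₁.strictAnti (Set.mem_Ioi.mpr one_pos)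
        (Set.mem_Ioi.mpr (lt_trans one_pos h1lt)) h1lt
      rw [φ₁.map_one] at this
      exact this
    set η : ℝ := 1 - φ₁.toFun (1 + δ / A) with hηdef
    have hηpos : 0 < η := by simp [hηdef]; linarith
    set C : ℝ := φ₂.toFun (B / A) with hCdef
    have hC : 0 < C := φ₂.pos _ (div_pos hB hA)
    have hmem : Set.Ioo (0 : ℝ) (η / C) ∈ nhdsWithin (0 : ℝ) (Set.Ioi 0) :=
      Ioo_mem_nhdsGT_of_mem (by constructor <;> simp [le_refl, div_pos hηpos hC])
    filter_upwards [hmem] with ε hε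
    intro u
    obtain ⟨hε0, hεC⟩ := hε
    have heq := hM ε hε0 u
    set m : ℝ := (M ε).chord u with hmdef
    set k : ℝ := K.chord u with hkdef
    set l : ℝ := L.chord u with hldef
    have hm : 0 < m := (M ε).chord_pos u
    have hk : 0 < k := K.chord_pos u
    have hl : 0 < l := L.chord_pos u
    have hkA : k ≤ A := huK u
    have hBl : B ≤ l := huL u
    -- Step 1: m < k
    have hφ2pos : 0 < φ₂.toFun (l / m) := φ₂.pos _ (div_pos hl hm)
    have hφ1lt : φ₁.toFun (k / m) < 1 := by nlinarith
    have hkm1 : 1 < k / m := by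
      by_contra h
      push_neg at h
      rcases eq_or_lt_of_le h with he | hlt
      · rw [he, φ₁.map_one] at hφ1lt; linarith
      · have := φ₁.strictAnti (Set.mem_Ioi.mpr (div_pos hk hm))
          (Set.mem_Ioi.mpr one_pos) hlt
        rw [φ₁.map_one] at this
        linarith
    have hmk : m < k := by
      have := (one_lt_div hm).mp hkm1
      exact this
    -- Step 2: k - m < δ
    have hkey : k - m < δ := by
      by_contra h
      push_neg at h
      have hmle : m ≤ k - δ := by linarith
      have hkm : 1 + δ / A ≤ k / m := by
        rw [le_div_iff₀ hm]
        have h1 : (δ / A) * m ≤ (δ / A) * (k - δ) :=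
          mul_le_mul_of_nonneg_left hmle (le_of_lt (div_pos hδ hA))
        have h2 : (δ / A) * (k - δ) ≤ (δ / A) * A := by
          apply mul_le_mul_of_nonneg_left _ (le_of_lt (div_pos hδ hA))
          linarith
        have h3 : (δ / A) * A = δ := div_mul_cancel₀ _ hA.ne'
        nlinarith
      have hφ1le : φ₁.toFun (k / m) ≤ φ₁.toFun (1 + δ / A) := by
        rcases eq_or_lt_of_le hkm with he | hlt
        · rw [he]
        · exact le_of_lt (φ₁.strictAnti (Set.mem_Ioi.mpr (lt_trans one_pos h1lt))
            (Set.mem_Ioi.mpr (lt_trans one_pos hkm1)) hlt)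
      have hlm : B / A ≤ l / m := div_le_div₀ hl.le hBl hm (le_trans hmk.le hkA)
      have hφ2le : φ₂.toFun (l / m) ≤ C := by
        rcases eq_or_lt_of_le hlm with he | hlt
        · rw [hCdef, ← he]
        · exact le_of_lt (φ₂.strictAnti (Set.mem_Ioi.mpr (div_pos hB hA))
            (Set.mem_Ioi.mpr (div_pos hl hm)) hlt)
      have hεφ2 : ε * φ₂.toFun (l / m) < η := by
        have h4 : ε * φ₂.toFun (l / m) < (η / C) * C := by nlinarith
        rwa [div_mul_cancel₀ _ hC.ne'] at h4
      nlinarith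
    have hdist : dist k m < δ := by
      rw [Real.dist_eq, abs_of_pos (by linarith : (0:ℝ) < k - m)]
      exact hkey
    exact hdist
end
end

section
/- Orlicz chord Minkowski inequality: if K, L are star bodies in R^n, 0 ≤ i < n, and φ ∈ Φ, then B_{φ,i}(K,L) ≥ B_i(K) · φ((B_i(L)/B_i(K))^{1/(n-i)}), where B_{φ,i}(K,L) = (1/n)∫_{S^{n-1}} φ(d(L,u)/d(K,u)) d(K,u)^{n-i} dS(u). If φ is strictly convex, equality holds if and only if K and L have similar chord. -/
open MeasureTheory Metric Filter Set

noncomputable section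

/-- The Orlicz mixed chord integral
`B_{φ,i}(K,L) = (1/n) ∫_{S^{n-1}} φ(d(L,u)/d(K,u)) d(K,u)^{n-i} dS(u)`. -/
def orliczMixedChordIntegral (n i : ℕ) (φ : ℝ → ℝ) (K L : StarBody n) : ℝ :=
  (1 / (n : ℝ)) * ∫ u, φ (L.chord u / K.chord u) * K.chord u ^ ((n : ℝ) - i)
    ∂(sphereMeasure n)

/-! Put `f = d(L,·)/d(K,·)` and `p = n - i ≥ 1`, and let `ν = d(K,·)^p dS`. Then
`B_{φ,i}(K,L) = B_i(K) ⨍ φ ∘ f dν` and `B_i(L)/B_i(K) = ⨍ f^p dν`. Jensen's inequality for `t ↦ t^p`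
gives `⨍ f ≤ (⨍ f^p)^{1/p}`, so, `φ` being decreasing and convex,
`φ((⨍ f^p)^{1/p}) ≤ φ(⨍ f) ≤ ⨍ φ ∘ f`. If `φ` is strictly convex, equality in the second Jensen
step forces `f` to be `ν`-a.e. constant, hence constant: `f` is continuous and `ν` charges every
nonempty open subset of the sphere. -/

/- Jensen's inequality in Mathlib needs a closed domain: this confines a positive `f` to some
`Ici a ⊆ Ioi 0`. -/
theorem Continuous.exists_pos_le_of_pos {X : Type*} [TopologicalSpace X] [CompactSpace X]
    {f : X → ℝ} (hf : Continuous f) (hf_pos : ∀ x, 0 < f x) : ∃ a, 0 < a ∧ ∀ x, a ≤ f x := by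
  cases isEmpty_or_nonempty X
  · exact ⟨1, one_pos, isEmptyElim⟩
  · obtain ⟨x₀, -, hx₀⟩ := isCompact_univ.exists_isMinOn univ_nonempty hf.continuousOn
    exact ⟨f x₀, hf_pos x₀, fun x => hx₀ (mem_univ x)⟩

section WeightedJensen

variable {X : Type*} [MeasurableSpace X] {ν : Measure X} [IsFiniteMeasure ν] {f : X → ℝ} {p : ℝ}

theorem average_le_rpow_average_rpow [NeZero ν] (hp : 1 ≤ p) (hf_nonneg : ∀ x, 0 ≤ f x)
    (hfi : Integrable f ν) (hfpi : Integrable (fun x => f x ^ p) ν) :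
    ⨍ x, f x ∂ν ≤ (⨍ x, f x ^ p ∂ν) ^ (1 / p) := by
  have hp0 : 0 < p := zero_lt_one.trans_le hp
  have hM : 0 ≤ ⨍ x, f x ∂ν :=
    (convex_Ici 0).average_mem isClosed_Ici (ae_of_all _ hf_nonneg) hfi
  have hJensen : (⨍ x, f x ∂ν) ^ p ≤ ⨍ x, f x ^ p ∂ν :=
    (convexOn_rpow hp).map_average_le (Real.continuous_rpow_const hp0.le).continuousOn
      isClosed_Ici (ae_of_all _ hf_nonneg) hfi hfpi
  calc ⨍ x, f x ∂ν = ((⨍ x, f x ∂ν) ^ p) ^ (1 / p) := by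
        rw [one_div, Real.rpow_rpow_inv hM hp0.ne']
    _ ≤ (⨍ x, f x ^ p ∂ν) ^ (1 / p) := by gcongr

variable [TopologicalSpace X] [CompactSpace X] [OpensMeasurableSpace X]

theorem Continuous.integrable_of_compactSpace (hf : Continuous f) : Integrable f ν :=
  hf.integrable_of_hasCompactSupport (HasCompactSupport.of_compactSpace f)

variable [NeZero ν] {φ : ℝ → ℝ}

theorem AntitoneOn.map_rpow_average_rpow_le_map_average (hφ : AntitoneOn φ (Ioi 0))
    (hp : 1 ≤ p) (hf : Continuous f) (hf_pos : ∀ x, 0 < f x) :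
    φ ((⨍ x, f x ^ p ∂ν) ^ (1 / p)) ≤ φ (⨍ x, f x ∂ν) := by
  obtain ⟨a, ha, hfa⟩ := hf.exists_pos_le_of_pos hf_pos
  have hfp : Continuous fun x => f x ^ p :=
    hf.rpow_const fun x => Or.inr (zero_le_one.trans hp)
  have hM : a ≤ ⨍ x, f x ∂ν :=
    (convex_Ici a).average_mem isClosed_Ici (ae_of_all _ hfa) hf.integrable_of_compactSpace
  have hMR := average_le_rpow_average_rpow (ν := ν) hp (fun x => (hf_pos x).le)
    hf.integrable_of_compactSpace hfp.integrable_of_compactSpace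
  exact hφ (ha.trans_le hM) (ha.trans_le (hM.trans hMR)) hMR

theorem ConvexOn.map_average_le_average_map_of_pos (hφ : ConvexOn ℝ (Ioi 0) φ)
    (hf : Continuous f) (hf_pos : ∀ x, 0 < f x) :
    φ (⨍ x, f x ∂ν) ≤ ⨍ x, φ (f x) ∂ν := by
  obtain ⟨a, ha, hfa⟩ := hf.exists_pos_le_of_pos hf_pos
  have hIci : Ici a ⊆ Ioi 0 := fun x hx => ha.trans_le hx
  have hφc : ContinuousOn φ (Ioi 0) := hφ.continuousOn isOpen_Ioi
  exact (hφ.subset hIci (convex_Ici a)).map_average_le (hφc.mono hIci) isClosed_Ici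
    (ae_of_all _ hfa) hf.integrable_of_compactSpace
    (hφc.comp_continuous hf hf_pos).integrable_of_compactSpace

theorem ConvexOn.map_rpow_average_rpow_le_average_map (hφ : ConvexOn ℝ (Ioi 0) φ)
    (hφ_anti : AntitoneOn φ (Ioi 0)) (hp : 1 ≤ p) (hf : Continuous f) (hf_pos : ∀ x, 0 < f x) :
    φ ((⨍ x, f x ^ p ∂ν) ^ (1 / p)) ≤ ⨍ x, φ (f x) ∂ν :=
  (hφ_anti.map_rpow_average_rpow_le_map_average hp hf hf_pos).trans
    (hφ.map_average_le_average_map_of_pos hf hf_pos)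

theorem StrictConvexOn.exists_eq_const_of_map_rpow_average_rpow_eq [ν.IsOpenPosMeasure]
    (hφ : StrictConvexOn ℝ (Ioi 0) φ) (hφ_anti : AntitoneOn φ (Ioi 0)) (hp : 1 ≤ p)
    (hf : Continuous f) (hf_pos : ∀ x, 0 < f x)
    (h_eq : φ ((⨍ x, f x ^ p ∂ν) ^ (1 / p)) = ⨍ x, φ (f x) ∂ν) :
    ∃ c, ∀ x, f x = c := by
  obtain ⟨a, ha, hfa⟩ := hf.exists_pos_le_of_pos hf_pos
  have hIci : Ici a ⊆ Ioi 0 := fun x hx => ha.trans_le hx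
  have hφc : ContinuousOn φ (Ioi 0) := hφ.convexOn.continuousOn isOpen_Ioi
  have h_map_average : φ (⨍ x, f x ∂ν) = ⨍ x, φ (f x) ∂ν :=
    le_antisymm (hφ.convexOn.map_average_le_average_map_of_pos hf hf_pos)
      (h_eq ▸ hφ_anti.map_rpow_average_rpow_le_map_average hp hf hf_pos)
  rcases (hφ.subset hIci (convex_Ici a)).ae_eq_const_or_map_average_lt (hφc.mono hIci)
    isClosed_Ici (ae_of_all ν hfa) hf.integrable_of_compactSpace
    (hφc.comp_continuous hf hf_pos).integrable_of_compactSpace with h_const | h_lt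
  · exact ⟨_, congrFun ((hf.ae_eq_iff_eq ν continuous_const).1 h_const)⟩
  · exact absurd h_map_average h_lt.ne

end WeightedJensen

namespace StarBody

variable {n : ℕ} (K : StarBody n)

theorem chord_pos_s14 (u : sphere (0 : EuclideanSpace ℝ (Fin n)) 1) : 0 < K.chord u :=
  half_pos (add_pos (K.radial_pos u) (K.radial_pos (-u)))

theorem continuous_chord : Continuous K.chord :=
  (K.radial_continuous.add (K.radial_continuous.comp continuous_neg)).div_const 2

end StarBody

instance {n : ℕ} [NeZero n] : Nonempty (sphere (0 : EuclideanSpace ℝ (Fin n)) 1) :=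
  (NormedSpace.sphere_nonempty.2 zero_le_one).to_subtype

instance (n : ℕ) : IsFiniteMeasure (sphereMeasure n) := by
  unfold sphereMeasure; infer_instance

instance (n : ℕ) : (sphereMeasure n).IsOpenPosMeasure := by
  unfold sphereMeasure; infer_instance

def chordMeasure (n i : ℕ) (K : StarBody n) : Measure (sphere (0 : EuclideanSpace ℝ (Fin n)) 1) :=
  (sphereMeasure n).withDensity fun u => ENNReal.ofReal (K.chord u ^ ((n : ℝ) - i))

section ChordMeasure

variable {n i : ℕ} (K L : StarBody n)

theorem continuous_chord_rpow (p : ℝ) : Continuous fun u => K.chord u ^ p :=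
  K.continuous_chord.rpow_const fun u => Or.inl (K.chord_pos_s14 u).ne'

instance : IsFiniteMeasure (chordMeasure n i K) :=
  isFiniteMeasure_withDensity_ofReal
    (continuous_chord_rpow K _).integrable_of_compactSpace.hasFiniteIntegral

instance : (chordMeasure n i K).IsOpenPosMeasure :=
  (withDensity_absolutelyContinuous'
    (continuous_chord_rpow K _).measurable.ennreal_ofReal.aemeasurable
    (ae_of_all _ fun u => (ENNReal.ofReal_pos.2 (Real.rpow_pos_of_pos (K.chord_pos_s14 u) _)).ne')
    ).isOpenPosMeasure

theorem integral_chordMeasure (g : sphere (0 : EuclideanSpace ℝ (Fin n)) 1 → ℝ) :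
    ∫ u, g u ∂chordMeasure n i K = ∫ u, g u * K.chord u ^ ((n : ℝ) - i) ∂sphereMeasure n := by
  rw [chordMeasure, integral_withDensity_eq_integral_toReal_smul
    (continuous_chord_rpow K _).measurable.ennreal_ofReal
    (ae_of_all _ fun _ => ENNReal.ofReal_lt_top)]
  congr 1 with u
  rw [ENNReal.toReal_ofReal (Real.rpow_nonneg (K.chord_pos_s14 u).le _), smul_eq_mul, mul_comm]

theorem chordIntegral_eq_mul_measureReal :
    chordIntegral n i K = 1 / (n : ℝ) * (chordMeasure n i K).real univ := by
  have h_mass := integral_chordMeasure (i := i) K fun _ => 1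
  simp only [integral_const, smul_eq_mul, mul_one, one_mul] at h_mass
  rw [chordIntegral, h_mass]

theorem chordIntegral_pos [NeZero n] : 0 < chordIntegral n i K := by
  rw [chordIntegral_eq_mul_measureReal]
  exact mul_pos (by simpa using NeZero.pos n) measureReal_univ_pos

theorem orliczMixedChordIntegral_eq_mul_average (φ : ℝ → ℝ) :
    orliczMixedChordIntegral n i φ K L =
      chordIntegral n i K * ⨍ u, φ (L.chord u / K.chord u) ∂chordMeasure n i K := by
  rw [orliczMixedChordIntegral, ← integral_chordMeasure, ← measure_smul_average,
    chordIntegral_eq_mul_measureReal, smul_eq_mul, mul_assoc]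

theorem chordIntegral_eq_mul_average :
    chordIntegral n i L =
      chordIntegral n i K * ⨍ u, (L.chord u / K.chord u) ^ ((n : ℝ) - i) ∂chordMeasure n i K := by
  have h_chord (u) : L.chord u ^ ((n : ℝ) - i) =
      (L.chord u / K.chord u) ^ ((n : ℝ) - i) * K.chord u ^ ((n : ℝ) - i) := by
    rw [Real.div_rpow (L.chord_pos_s14 u).le (K.chord_pos_s14 u).le,
      div_mul_cancel₀ _ (Real.rpow_pos_of_pos (K.chord_pos_s14 u) _).ne']
  rw [chordIntegral, funext h_chord, ← integral_chordMeasure, ← measure_smul_average,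
    chordIntegral_eq_mul_measureReal, smul_eq_mul, mul_assoc]

end ChordMeasure

theorem similarChord_iff_exists_div_chord_eq {n : ℕ} {K L : StarBody n} :
    SimilarChord K L ↔ ∃ c, 0 < c ∧ ∀ u, L.chord u / K.chord u = c := by
  constructor
  · rintro ⟨lam, hlam, hKL⟩
    refine ⟨lam⁻¹, inv_pos.2 hlam, fun u => ?_⟩
    rw [hKL u, div_mul_cancel_right₀ (L.chord_pos_s14 u).ne']
  · rintro ⟨c, hc, hLK⟩
    refine ⟨c⁻¹, inv_pos.2 hc, fun u => ?_⟩
    rw [← hLK u, inv_div, div_mul_cancel₀ _ (L.chord_pos_s14 u).ne']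

/-- Orlicz chord Minkowski inequality:
`B_{φ,i}(K,L) ≥ B_i(K) φ((B_i(L)/B_i(K))^{1/(n−i)})`, with equality (for strictly
convex `φ`) iff `K` and `L` have similar chord. -/
theorem orlicz_chord_minkowski {n i : ℕ} (hi : i < n) (φ : OrliczPhi) (K L : StarBody n) :
    orliczMixedChordIntegral n i φ.toFun K L ≥
      chordIntegral n i K *
        φ.toFun ((chordIntegral n i L / chordIntegral n i K) ^ (1 / ((n : ℝ) - i))) ∧
    (StrictConvexOn ℝ (Set.Ioi 0) φ.toFun →
      (orliczMixedChordIntegral n i φ.toFun K L =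
          chordIntegral n i K *
            φ.toFun ((chordIntegral n i L / chordIntegral n i K) ^ (1 / ((n : ℝ) - i))) ↔
        SimilarChord K L)) := by
  have : NeZero n := ⟨(i.zero_le.trans_lt hi).ne'⟩
  have hp : 1 ≤ (n : ℝ) - i := by
    rw [le_sub_iff_add_le']
    exact_mod_cast hi
  have hp0 : (n : ℝ) - i ≠ 0 := by linarith
  have hBK : 0 < chordIntegral n i K := chordIntegral_pos K
  have hf : Continuous fun u => L.chord u / K.chord u :=
    L.continuous_chord.div K.continuous_chord fun u => (K.chord_pos_s14 u).ne'
  have hf_pos (u) : 0 < L.chord u / K.chord u := div_pos (L.chord_pos_s14 u) (K.chord_pos_s14 u)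
  rw [orliczMixedChordIntegral_eq_mul_average, chordIntegral_eq_mul_average K L,
    mul_div_cancel_left₀ _ hBK.ne']
  refine ⟨mul_le_mul_of_nonneg_left (φ.convexOn.map_rpow_average_rpow_le_average_map
    φ.strictAnti.antitoneOn hp hf hf_pos) hBK.le, fun hφ => ⟨fun h_eq => ?_, fun h_sim => ?_⟩⟩
  · obtain ⟨c, hc⟩ := hφ.exists_eq_const_of_map_rpow_average_rpow_eq φ.strictAnti.antitoneOn hp
      hf hf_pos (mul_left_cancel₀ hBK.ne' h_eq).symm
    exact similarChord_iff_exists_div_chord_eq.2 ⟨c, hc (Classical.arbitrary _) ▸ hf_pos _, hc⟩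
  · obtain ⟨c, hc, hc_eq⟩ := similarChord_iff_exists_div_chord_eq.1 h_sim
    simp only [hc_eq, average_const, one_div, Real.rpow_rpow_inv hc.le hp0]
end
end
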